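/- Let √ denote the branch of the square root on ℂ ∖ (−∞, 0] with positive real part. For every λ ∈ ℂ ∖ [−4, 0] and every integer x, ∫₀¹ cos(2πux)/(4 sin²(πu) + λ) du = (1/(λ √(1 + 4/λ))) · (1 + (λ/2)(1 + √(1 + 4/λ)))^(−|x|). -/

import Mathlib

/-!
Put `s = √(1 + 4/λ)` and `ρ = 1 + (λ/2)(1 + s)`, so that `ρ + ρ⁻¹ = λ + 2`. Both sides of the
identity, as functions of `x ∈ ℤ`, are bounded solutions of the lattice equation
`(−Δ + λ) G = δ₀`: for the integral this is
`cos(θ + 2πu) + cos(θ − 2πu) − 2 cos θ = −4 sin²(πu) cos θ` together with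
`∫₀¹ cos(2πux) du = δ₀(x)`, and for `x ↦ ρ^{−|x|} / (λ s)` it is a direct computation.
Their difference solves the homogeneous equation, whose solutions are `α ρ^x + β ρ^{−x}`.
Since `Re s > 0` and `ρ = (s + 1)/(s − 1)`, we have `|ρ| > 1`, so boundedness in both directions
forces `α = β = 0`.
-/

open Real

def discreteLaplacian {R : Type*} [Ring R] (f : ℤ → R) (x : ℤ) : R :=
  f (x + 1) + f (x - 1) - 2 * f x

section BoundedSolutions

variable {𝕜 : Type*} [NormedField 𝕜] {r : 𝕜}

theorem eq_zero_of_forall_succ_eq_mul_of_bounded (hr : 1 < ‖r‖) {a : ℕ → 𝕜}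
    (ha : ∀ n, a (n + 1) = r * a n) (hbdd : ∃ C, ∀ n, ‖a n‖ ≤ C) : a 0 = 0 := by
  obtain ⟨C, hC⟩ := hbdd
  have hpow (n : ℕ) : a n = r ^ n * a 0 := by
    induction n with
    | zero => simp
    | succ n ih => rw [ha, ih, pow_succ']; ring
  by_contra h0
  obtain ⟨n, hn⟩ := pow_unbounded_of_one_lt (C / ‖a 0‖) hr
  have hCn := hC n
  rw [hpow, norm_mul, norm_pow] at hCn
  rw [div_lt_iff₀ (norm_pos_iff.mpr h0)] at hn
  linarith

theorem eq_zero_of_discreteLaplacian_eq_mul_of_bounded (hr : 1 < ‖r‖) {f : ℤ → 𝕜}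
    (hf : ∀ x, discreteLaplacian f x = (r + r⁻¹ - 2) * f x)
    (hbdd : ∃ C, ∀ x, ‖f x‖ ≤ C) : f = 0 := by
  obtain ⟨C, hC⟩ := hbdd
  unfold discreteLaplacian at hf
  have hrec (x : ℤ) : f (x + 1) + f (x - 1) = (r + r⁻¹) * f x := by linear_combination hf x
  have hr0 : r ≠ 0 := norm_pos_iff.mp (one_pos.trans hr)
  have hdiff (y z : ℤ) : ‖f y - r⁻¹ * f z‖ ≤ C + ‖r⁻¹‖ * C :=
    (norm_sub_le _ _).trans (by rw [norm_mul]; gcongr; exacts [hC y, hC z])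
  funext k
  -- `f (x ± 1) - r⁻¹ f x` gets multiplied by `r` at each step away from `k`
  have hfwd : f (k + 1) - r⁻¹ * f k = 0 := by
    simpa using eq_zero_of_forall_succ_eq_mul_of_bounded
      (a := fun n : ℕ => f (k + n + 1) - r⁻¹ * f (k + n)) hr
      (fun n => by
        have := hrec (k + n + 1)
        push_cast
        ring_nf at this ⊢
        linear_combination this + f (k + n) * mul_inv_cancel₀ hr0)
      ⟨_, fun n => hdiff _ _⟩
  have hbwd : f (k - 1) - r⁻¹ * f k = 0 := by
    simpa using eq_zero_of_forall_succ_eq_mul_of_bounded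
      (a := fun n : ℕ => f (k - n - 1) - r⁻¹ * f (k - n)) hr
      (fun n => by
        have := hrec (k - n - 1)
        push_cast
        ring_nf at this ⊢
        linear_combination this + f (k - n) * mul_inv_cancel₀ hr0)
      ⟨_, fun n => hdiff _ _⟩
  have hr2 : r - r⁻¹ ≠ 0 := by
    intro h
    have : ‖r‖ ^ 2 = 1 := by
      rw [← norm_pow, show r ^ 2 = 1 by field_simp at h; linear_combination h, norm_one]
    nlinarith
  have hk : (r - r⁻¹) * f k = 0 := by linear_combination hfwd + hbwd - hrec k
  exact (mul_eq_zero.mp hk).resolve_left hr2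

theorem eq_of_neg_discreteLaplacian_add_mul_eq_of_bounded (hr : 1 < ‖r‖) {f g b : ℤ → 𝕜}
    (hf : ∀ x, -discreteLaplacian f x + (r + r⁻¹ - 2) * f x = b x)
    (hg : ∀ x, -discreteLaplacian g x + (r + r⁻¹ - 2) * g x = b x)
    (hfb : ∃ C, ∀ x, ‖f x‖ ≤ C) (hgb : ∃ C, ∀ x, ‖g x‖ ≤ C) : f = g := by
  obtain ⟨C, hC⟩ := hfb
  obtain ⟨D, hD⟩ := hgb
  refine sub_eq_zero.mp (eq_zero_of_discreteLaplacian_eq_mul_of_bounded hr (fun x => ?_)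
    ⟨C + D, fun x => (norm_sub_le _ _).trans (add_le_add (hC x) (hD x))⟩)
  simp only [discreteLaplacian, Pi.sub_apply] at hf hg ⊢
  linear_combination hg x - hf x

end BoundedSolutions

theorem zpow_neg_abs_add_one_add_zpow_neg_abs_sub_one {K : Type*} [Field K] {r : K} (hr : r ≠ 0)
    (x : ℤ) :
    r ^ (-|x + 1|) + r ^ (-|x - 1|) = (r + r⁻¹) * r ^ (-|x|) - if x = 0 then r - r⁻¹ else 0 := by
  rcases lt_trichotomy x 0 with hx | rfl | hx
  · rw [abs_of_nonpos (by omega), abs_of_neg (by omega), abs_of_neg hx, if_neg hx.ne]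
    simp only [neg_neg, zpow_add_one₀ hr, zpow_sub_one₀ hr]
    ring
  · simp
  · rw [abs_of_pos (by omega), abs_of_nonneg (by omega), abs_of_pos hx, if_neg hx.ne']
    rw [show -(x + 1) = -x - 1 by ring, show -(x - 1) = -x + 1 by ring, zpow_sub_one₀ hr,
      zpow_add_one₀ hr]
    ring

theorem Complex.re_cpow_inv_two_pos {z : ℂ} (hz : z ∈ slitPlane) : 0 < (z ^ (2⁻¹ : ℂ)).re := by
  rw [cpow_inv_two_re, Real.sqrt_pos]
  rcases mem_slitPlane_iff.mp hz with hre | him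
  · positivity
  · linarith [neg_abs_le z.re, abs_re_lt_norm.mpr him]

theorem Complex.norm_sub_one_lt_norm_add_one {z : ℂ} (hz : 0 < z.re) : ‖z - 1‖ < ‖z + 1‖ := by
  rw [← sq_lt_sq₀ (norm_nonneg _) (norm_nonneg _), Complex.sq_norm, Complex.sq_norm,
    normSq_apply, normSq_apply]
  simp only [sub_re, add_re, one_re, sub_im, add_im, one_im]
  nlinarith

theorem Real.cos_add_two_mul_add_cos_sub_two_mul (a b : ℝ) :
    cos (a + 2 * b) + cos (a - 2 * b) = 2 * cos a - 4 * sin b ^ 2 * cos a := by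
  rw [cos_add, cos_sub, cos_two_mul, cos_sq']
  ring

theorem integral_cos_two_pi_mul_int (x : ℤ) :
    ∫ u in (0:ℝ)..1, cos (2 * π * u * x) = if x = 0 then 1 else 0 := by
  split_ifs with hx
  · simp [hx]
  have hc : 2 * π * x ≠ 0 := by positivity
  rw [show (fun u : ℝ => cos (2 * π * u * x)) = fun u => cos (2 * π * x * u) from
    funext fun u => by ring_nf, intervalIntegral.integral_comp_mul_left cos hc, integral_cos,
    mul_zero, mul_one, sin_zero, show 2 * π * x = (2 * x : ℤ) * π by push_cast; ring,
    sin_int_mul_pi]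
  simp

theorem one_add_four_div_mem_slitPlane {lam : ℂ}
    (hlam : ¬ (lam.im = 0 ∧ -4 ≤ lam.re ∧ lam.re ≤ 0)) : 1 + 4 / lam ∈ Complex.slitPlane := by
  rw [Complex.mem_slitPlane_iff]
  by_contra! h
  obtain ⟨hre, him⟩ := h
  set t := (1 + 4 / lam).re
  have hw : 1 + 4 / lam = t := Complex.ext rfl (by simpa using him)
  have hlam0 : lam ≠ 0 := by rintro rfl; exact hlam ⟨rfl, by norm_num, le_rfl⟩
  have hlam_eq : lam = ((4 / (t - 1) : ℝ) : ℂ) := by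
    have : (t : ℂ) - 1 ≠ 0 := by
      rw [← Complex.ofReal_one, ← Complex.ofReal_sub, Complex.ofReal_ne_zero]; linarith
    rw [Complex.ofReal_div, Complex.ofReal_sub, ← hw]; push_cast; field_simp; ring
  refine hlam ⟨by rw [hlam_eq, Complex.ofReal_im], ?_, ?_⟩ <;> rw [hlam_eq, Complex.ofReal_re]
  · rw [le_div_iff_of_neg (by linarith)]; linarith
  · exact div_nonpos_of_nonneg_of_nonpos (by norm_num) (by linarith)

noncomputable def greenIntegral (lam : ℂ) (x : ℤ) : ℂ :=
  ∫ u in (0:ℝ)..1, (cos (2 * π * u * x) : ℂ) / (4 * (sin (π * u) : ℂ) ^ 2 + lam)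

section GreenIntegral

variable {lam : ℂ} (hlam : ¬ (lam.im = 0 ∧ -4 ≤ lam.re ∧ lam.re ≤ 0))
include hlam

theorem four_mul_sin_sq_add_ne_zero (u : ℝ) : 4 * (sin (π * u) : ℂ) ^ 2 + lam ≠ 0 := by
  intro h
  have hlam_eq : lam = ((-4 * sin (π * u) ^ 2 : ℝ) : ℂ) := by
    push_cast at h ⊢; linear_combination h
  refine hlam ⟨by rw [hlam_eq, Complex.ofReal_im], ?_, ?_⟩ <;> rw [hlam_eq, Complex.ofReal_re]
  · nlinarith [sin_sq_le_one (π * u)]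
  · nlinarith [sq_nonneg (sin (π * u))]

theorem greenIntegral_add_one_add_greenIntegral_sub_one (x : ℤ) :
    greenIntegral lam (x + 1) + greenIntegral lam (x - 1)
      = (lam + 2) * greenIntegral lam x - if x = 0 then 1 else 0 := by
  have hint (y : ℤ) : IntervalIntegrable
      (fun u : ℝ => (cos (2 * π * u * y) : ℂ) / (4 * (sin (π * u) : ℂ) ^ 2 + lam))
      MeasureTheory.volume 0 1 :=
    (Continuous.div (by fun_prop) (by fun_prop)
      (four_mul_sin_sq_add_ne_zero hlam)).intervalIntegrable _ _
  have hpoint (u : ℝ) :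
      (cos (2 * π * u * ↑(x + 1)) : ℂ) / (4 * (sin (π * u) : ℂ) ^ 2 + lam)
        + (cos (2 * π * u * ↑(x - 1)) : ℂ) / (4 * (sin (π * u) : ℂ) ^ 2 + lam)
      = (lam + 2) * ((cos (2 * π * u * x) : ℂ) / (4 * (sin (π * u) : ℂ) ^ 2 + lam))
        - (cos (2 * π * u * x) : ℂ) := by
    have hcos := cos_add_two_mul_add_cos_sub_two_mul (2 * π * u * x) (π * u)
    rw [show 2 * π * u * x + 2 * (π * u) = 2 * π * u * ↑(x + 1) by push_cast; ring,
      show 2 * π * u * x - 2 * (π * u) = 2 * π * u * ↑(x - 1) by push_cast; ring] at hcos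
    have hd := four_mul_sin_sq_add_ne_zero hlam u
    have hcosC := congrArg Complex.ofReal hcos
    field_simp
    push_cast at hcosC ⊢
    linear_combination hcosC
  have hdelta : ∫ u in (0:ℝ)..1, (cos (2 * π * u * x) : ℂ) = if x = 0 then 1 else 0 := by
    rw [intervalIntegral.integral_ofReal, integral_cos_two_pi_mul_int]
    split_ifs <;> simp
  rw [greenIntegral, greenIntegral, greenIntegral,
    ← intervalIntegral.integral_add (hint _) (hint _),
    intervalIntegral.integral_congr fun u _ => hpoint u,
    intervalIntegral.integral_sub ((hint x).const_mul _)
      ((by fun_prop : Continuous _).intervalIntegrable _ _),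
    intervalIntegral.integral_const_mul, hdelta]

theorem neg_discreteLaplacian_greenIntegral (x : ℤ) :
    -discreteLaplacian (greenIntegral lam) x + lam * greenIntegral lam x
      = if x = 0 then 1 else 0 := by
  rw [discreteLaplacian]
  linear_combination -greenIntegral_add_one_add_greenIntegral_sub_one hlam x

theorem exists_norm_greenIntegral_le : ∃ C, ∀ x, ‖greenIntegral lam x‖ ≤ C := by
  refine ⟨∫ u in (0:ℝ)..1, ‖(4 * (sin (π * u) : ℂ) ^ 2 + lam)⁻¹‖, fun x => ?_⟩
  refine intervalIntegral.norm_integral_le_of_norm_le zero_le_one (.of_forall fun u _ => ?_)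
    ((Continuous.inv₀ (by fun_prop) (four_mul_sin_sq_add_ne_zero hlam)).norm.intervalIntegrable
      _ _)
  rw [div_eq_mul_inv, norm_mul, Complex.norm_real, norm_eq_abs]
  exact mul_le_of_le_one_left (norm_nonneg _) (abs_cos_le_one _)

end GreenIntegral

noncomputable def latticeGreenRoot (lam s : ℂ) : ℂ :=
  1 + lam / 2 * (1 + s)

noncomputable def latticeGreenClosedForm (lam s : ℂ) (x : ℤ) : ℂ :=
  1 / (lam * s) * latticeGreenRoot lam s ^ (-|x|)

section ClosedForm

variable {lam s : ℂ} (hs : lam * s ^ 2 = lam + 4)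
include hs

theorem latticeGreenRoot_mul_one_add_mul_one_sub :
    latticeGreenRoot lam s * (1 + lam / 2 * (1 - s)) = 1 := by
  rw [latticeGreenRoot]
  linear_combination (-lam / 4) * hs

theorem latticeGreenRoot_ne_zero : latticeGreenRoot lam s ≠ 0 :=
  left_ne_zero_of_mul_eq_one (latticeGreenRoot_mul_one_add_mul_one_sub hs)

theorem latticeGreenRoot_add_inv_sub_two :
    latticeGreenRoot lam s + (latticeGreenRoot lam s)⁻¹ - 2 = lam := by
  rw [← eq_inv_of_mul_eq_one_right (latticeGreenRoot_mul_one_add_mul_one_sub hs),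
    latticeGreenRoot]
  ring

theorem latticeGreenRoot_sub_inv :
    latticeGreenRoot lam s - (latticeGreenRoot lam s)⁻¹ = lam * s := by
  rw [← eq_inv_of_mul_eq_one_right (latticeGreenRoot_mul_one_add_mul_one_sub hs),
    latticeGreenRoot]
  ring

theorem one_lt_norm_latticeGreenRoot (hre : 0 < s.re) : 1 < ‖latticeGreenRoot lam s‖ := by
  have hcayley : latticeGreenRoot lam s * (s - 1) = s + 1 := by
    rw [latticeGreenRoot]; linear_combination hs / 2
  have hlt := Complex.norm_sub_one_lt_norm_add_one hre
  rw [← hcayley, norm_mul] at hlt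
  exact lt_of_mul_lt_mul_right (by simpa using hlt) (norm_nonneg _)

theorem neg_discreteLaplacian_latticeGreenClosedForm (hs0 : s ≠ 0) (x : ℤ) :
    -discreteLaplacian (latticeGreenClosedForm lam s) x + lam * latticeGreenClosedForm lam s x
      = if x = 0 then 1 else 0 := by
  have hlam0 : lam ≠ 0 := by rintro rfl; norm_num at hs
  have hc : 1 / (lam * s) * (lam * s) = 1 := one_div_mul_cancel (mul_ne_zero hlam0 hs0)
  have hz := zpow_neg_abs_add_one_add_zpow_neg_abs_sub_one (latticeGreenRoot_ne_zero hs) x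
  have hadd := latticeGreenRoot_add_inv_sub_two hs
  have hsub := latticeGreenRoot_sub_inv hs
  simp only [discreteLaplacian, latticeGreenClosedForm]
  split_ifs at hz ⊢
  · linear_combination (-(1 / (lam * s))) * hz
      - 1 / (lam * s) * latticeGreenRoot lam s ^ (-|x|) * hadd + 1 / (lam * s) * hsub + hc
  · linear_combination (-(1 / (lam * s))) * hz
      - 1 / (lam * s) * latticeGreenRoot lam s ^ (-|x|) * hadd

theorem exists_norm_latticeGreenClosedForm_le (hre : 0 < s.re) :
    ∃ C, ∀ x, ‖latticeGreenClosedForm lam s x‖ ≤ C := by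
  refine ⟨‖1 / (lam * s)‖, fun x => ?_⟩
  rw [latticeGreenClosedForm, norm_mul, norm_zpow]
  exact mul_le_of_le_one_right (norm_nonneg _)
    (zpow_le_one_of_nonpos₀ (one_lt_norm_latticeGreenRoot hs hre).le (by simp))

end ClosedForm

theorem green_function_closed_form_complex (lam : ℂ)
    (hlam : ¬ (lam.im = 0 ∧ -4 ≤ lam.re ∧ lam.re ≤ 0)) (x : ℤ) :
    ∫ u in (0:ℝ)..1,
        (Real.cos (2 * π * u * (x : ℝ)) : ℂ) / (4 * (Real.sin (π * u) : ℂ) ^ 2 + lam)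
      = (1 / (lam * (1 + 4 / lam) ^ ((1 : ℂ) / 2))) *
        (1 + (lam / 2) * (1 + (1 + 4 / lam) ^ ((1 : ℂ) / 2))) ^ (-|x|) := by
  have hlam0 : lam ≠ 0 := by rintro rfl; exact hlam ⟨rfl, by norm_num, le_rfl⟩
  have hre : 0 < ((1 + 4 / lam) ^ ((1 : ℂ) / 2)).re := by
    rw [one_div]; exact Complex.re_cpow_inv_two_pos (one_add_four_div_mem_slitPlane hlam)
  have hs : lam * ((1 + 4 / lam) ^ ((1 : ℂ) / 2)) ^ 2 = lam + 4 := by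
    have hsq := Complex.cpow_nat_inv_pow (1 + 4 / lam) two_ne_zero
    rw [Nat.cast_two] at hsq
    rw [one_div, hsq]
    field_simp
  set s := (1 + 4 / lam) ^ ((1 : ℂ) / 2)
  have hs0 : s ≠ 0 := fun h => by simp [h] at hre
  have hμ := latticeGreenRoot_add_inv_sub_two hs
  exact congrFun (eq_of_neg_discreteLaplacian_add_mul_eq_of_bounded
    (one_lt_norm_latticeGreenRoot hs hre) (b := fun y => if y = 0 then 1 else 0)
    (fun y => by rw [hμ]; exact neg_discreteLaplacian_greenIntegral hlam y)
    (fun y => by rw [hμ]; exact neg_discreteLaplacian_latticeGreenClosedForm hs hs0 y)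
    (exists_norm_greenIntegral_le hlam) (exists_norm_latticeGreenClosedForm_le hs hre)) x
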